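/- arXiv:2408.12094 — 2 statements merged into one kernel-verified Lean document; each statement's English description precedes it below -/
import Mathlib

section
/- Let f : [0,∞) → X be bounded and continuous, let u₀ ∈ X be such that ζ₀ := u₀ − ∫_0^∞ G(0,s) f(s) ds belongs to P(0)X, and define u(t) := U(t,0) ζ₀ + ∫_0^∞ G(t,s) f(s) ds for t ≥ 0. Then for all t ≥ 0, ‖u(t)‖ ≤ N ‖u₀‖ + (3(1+H)N/β) · sup_{s≥0} ‖f(s)‖. -/
open MeasureTheory Real Filter Bornology

/-- An evolution family on a Banach space `X` together with an exponential dichotomy: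
projections `P t`, the inverses `V s t` of the restrictions of `U t s` to the kernels
of the projections (i.e. `V s t = U_Q(s,t)` for `s ≤ t`), dichotomy constants `N, β`
and a bound `H` on the norms of the projections. -/
structure EvolutionDichotomy (X : Type*) [NormedAddCommGroup X] [NormedSpace ℝ X] where
  U : ℝ → ℝ → X →L[ℝ] X
  P : ℝ → X →L[ℝ] X
  V : ℝ → ℝ → X →L[ℝ] X
  N : ℝ
  β : ℝ
  H : ℝ
  N_pos : 0 < N
  β_pos : 0 < β
  U_id : ∀ s, U s s = ContinuousLinearMap.id ℝ X
  U_comp : ∀ ⦃s r t : ℝ⦄, s ≤ r → r ≤ t → ∀ x, U t r (U r s x) = U t s x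
  U_cont : ∀ x : X, ContinuousOn (fun p : ℝ × ℝ => U p.1 p.2 x) {p : ℝ × ℝ | p.2 ≤ p.1}
  P_proj : ∀ t x, P t (P t x) = P t x
  P_cont : ∀ x : X, Continuous fun t => P t x
  P_bound : ∀ t, ‖P t‖ ≤ H
  comm : ∀ ⦃s t : ℝ⦄, s ≤ t → ∀ x, P t (U t s x) = U t s (P s x)
  V_mapsTo : ∀ ⦃s t : ℝ⦄, s ≤ t → ∀ x, P s (V s t (x - P t x)) = 0
  V_left : ∀ ⦃s t : ℝ⦄, s ≤ t → ∀ x, V s t (U t s (x - P s x)) = x - P s x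
  V_right : ∀ ⦃s t : ℝ⦄, s ≤ t → ∀ x, U t s (V s t (x - P t x)) = x - P t x
  P_decay : ∀ ⦃s t : ℝ⦄, s ≤ t → ∀ x, ‖U t s (P s x)‖ ≤ N * Real.exp (-β * (t - s)) * ‖x‖
  Q_decay : ∀ ⦃s t : ℝ⦄, s ≤ t → ∀ x, ‖V s t (x - P t x)‖ ≤ N * Real.exp (-β * (t - s)) * ‖x‖

namespace EvolutionDichotomy

variable {X : Type*} [NormedAddCommGroup X] [NormedSpace ℝ X]

/-- The complementary projection `Q t = Id - P t`. -/
noncomputable def Q (E : EvolutionDichotomy X) (t : ℝ) : X →L[ℝ] X :=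
  ContinuousLinearMap.id ℝ X - E.P t

/-- The Green function of the dichotomy: `G t s = P t ∘ U t s` for `t > s` and
`G t s = -(U_Q(t,s) ∘ Q s)` for `t ≤ s`. -/
noncomputable def G (E : EvolutionDichotomy X) (t s : ℝ) : X →L[ℝ] X :=
  if s < t then (E.P t).comp (E.U t s) else -((E.V t s).comp (E.Q s))

/-- The Green function is exponentially almost periodic. -/
def ExpAP (E : EvolutionDichotomy X) : Prop :=
  ∀ η > (0:ℝ), ∀ ε > (0:ℝ), ∃ γ > (0:ℝ), ∃ l > (0:ℝ), ∀ a : ℝ,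
    ∃ T ∈ Set.Icc a (a + l), ∀ t s : ℝ, η ≤ |t - s| →
      ‖E.G (t + T) (s + T) - E.G t s‖ ≤ ε * Real.exp (-γ * |t - s|)

end EvolutionDichotomy

/-- A bounded continuous function `f : ℝ → X` is (Bohr) almost periodic if for every `ε > 0`
there is `l > 0` such that every interval of length `l` contains an `ε`-almost period. -/
def AlmostPeriodic {X : Type*} [NormedAddCommGroup X] (f : ℝ → X) : Prop :=
  Continuous f ∧ Bornology.IsBounded (Set.range f) ∧
  ∀ ε > (0:ℝ), ∃ l > (0:ℝ), ∀ a : ℝ, ∃ T ∈ Set.Icc a (a + l),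
    ∀ t : ℝ, ‖f (t + T) - f t‖ < ε

/-- A function on `[0,∞)` is asymptotically almost periodic if it is the sum of an almost
periodic function and a continuous function vanishing at infinity. -/
def AsympAlmostPeriodic {X : Type*} [NormedAddCommGroup X] (g : ℝ → X) : Prop :=
  ∃ h φ : ℝ → X, AlmostPeriodic h ∧ ContinuousOn φ (Set.Ici 0) ∧
    Filter.Tendsto (fun t => ‖φ t‖) Filter.atTop (nhds 0) ∧
    ∀ t : ℝ, 0 ≤ t → g t = h t + φ t

/-- `PAP0`: bounded continuous functions with vanishing mean value. -/
def PAP0 {X : Type*} [NormedAddCommGroup X] (φ : ℝ → X) : Prop :=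
  Continuous φ ∧ Bornology.IsBounded (Set.range φ) ∧
  Filter.Tendsto (fun r : ℝ => (1 / (2 * r)) * ∫ t in (-r)..r, ‖φ t‖)
    Filter.atTop (nhds 0)

/-- A bounded continuous function is pseudo almost periodic if it is the sum of an almost
periodic function and a `PAP0` function. -/
def PseudoAP {X : Type*} [NormedAddCommGroup X] (f : ℝ → X) : Prop :=
  ∃ g φ : ℝ → X, AlmostPeriodic g ∧ PAP0 φ ∧ ∀ t : ℝ, f t = g t + φ t

/-!
Since `P(0) G(0,s) = 0` for `s > 0`, the condition `ζ₀ ∈ P(0)X` forces `ζ₀ = P(0) u₀`, so the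
first term is at most `N ‖u₀‖`. The Green function is dominated by `N e^{-β|t-s|}`, whose integral
over the whole line is `2/β`; this bounds the second term by `2N/β · sup ‖f‖`, which is below the
stated constant.
-/

open Set

theorem integral_exp_neg_mul_abs {β : ℝ} (hβ : 0 < β) : ∫ x, exp (-β * |x|) = 2 / β := by
  rw [integral_comp_abs (f := fun x => exp (-β * x)), integral_exp_mul_Ioi (by linarith)]
  field_simp
  simp

theorem integrable_exp_neg_mul_abs {β : ℝ} (hβ : 0 < β) :
    Integrable fun x => exp (-β * |x|) :=
  Integrable.of_integral_ne_zero <| by rw [integral_exp_neg_mul_abs hβ]; positivity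

theorem norm_setIntegral_le_of_norm_le_mul_exp_abs_sub {X : Type*} [NormedAddCommGroup X]
    [NormedSpace ℝ X] {g : ℝ → X} {S : Set ℝ} (hS : MeasurableSet S) {t C β : ℝ}
    (hβ : 0 < β) (hC : 0 ≤ C) (hg : ∀ s ∈ S, ‖g s‖ ≤ C * exp (-β * |t - s|)) :
    ‖∫ s in S, g s‖ ≤ 2 * C / β := by
  have hker : Integrable fun s => C * exp (-β * |t - s|) :=
    ((integrable_exp_neg_mul_abs hβ).comp_sub_left t).const_mul C
  calc ‖∫ s in S, g s‖ ≤ ∫ s in S, C * exp (-β * |t - s|) :=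
        norm_integral_le_of_norm_le hker.integrableOn ((ae_restrict_iff' hS).2 (.of_forall hg))
    _ ≤ ∫ s, C * exp (-β * |t - s|) :=
        setIntegral_le_integral hker (.of_forall fun s => by positivity)
    _ = 2 * C / β := by
        rw [integral_const_mul, integral_sub_left_eq_self (fun s => exp (-β * |s|)),
          integral_exp_neg_mul_abs hβ, mul_div_assoc']
        ring

theorem norm_le_iSup_norm_of_isBounded_image {α X : Type*} [SeminormedAddCommGroup X]
    {f : α → X} {S : Set α} (hf : Bornology.IsBounded (f '' S)) {a : α} (ha : a ∈ S) :
    ‖f a‖ ≤ ⨆ x : S, ‖f x‖ := by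
  obtain ⟨C, hC⟩ := isBounded_iff_forall_norm_le.mp hf
  refine le_ciSup (f := fun x : S => ‖f x‖) ⟨C, ?_⟩ ⟨a, ha⟩
  rintro _ ⟨x, rfl⟩
  exact hC _ (mem_image_of_mem f x.2)

namespace EvolutionDichotomy

variable {X : Type*} [NormedAddCommGroup X] [NormedSpace ℝ X] (E : EvolutionDichotomy X)

theorem H_nonneg : 0 ≤ E.H := (norm_nonneg _).trans (E.P_bound 0)

theorem norm_U_P_le {s t : ℝ} (hst : s ≤ t) (x : X) :
    ‖E.U t s (E.P s x)‖ ≤ E.N * ‖x‖ := by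
  have hexp : exp (-E.β * (t - s)) ≤ 1 :=
    exp_le_one_iff.2 (by nlinarith [E.β_pos, sub_nonneg.2 hst])
  calc ‖E.U t s (E.P s x)‖ ≤ E.N * exp (-E.β * (t - s)) * ‖x‖ := E.P_decay hst x
    _ ≤ E.N * 1 * ‖x‖ := by gcongr; exact E.N_pos.le
    _ = E.N * ‖x‖ := by rw [mul_one]

theorem G_apply_of_lt {s t : ℝ} (h : s < t) (x : X) : E.G t s x = E.P t (E.U t s x) := by
  simp [G, h]

theorem G_apply_of_le {s t : ℝ} (h : t ≤ s) (x : X) : E.G t s x = -E.V t s (x - E.P s x) := by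
  simp [G, not_lt.2 h, Q]

theorem norm_G_apply_le (t s : ℝ) (x : X) :
    ‖E.G t s x‖ ≤ E.N * exp (-E.β * |t - s|) * ‖x‖ := by
  rcases lt_or_ge s t with h | h
  · rw [E.G_apply_of_lt h, E.comm h.le, abs_of_pos (sub_pos.2 h)]
    exact E.P_decay h.le x
  · rw [E.G_apply_of_le h, norm_neg, abs_sub_comm, abs_of_nonneg (sub_nonneg.2 h)]
    exact E.Q_decay h x

theorem P_G_apply_of_le {s t : ℝ} (h : t ≤ s) (x : X) : E.P t (E.G t s x) = 0 := by
  rw [E.G_apply_of_le h, map_neg, E.V_mapsTo h, neg_zero]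

theorem P_setIntegral_G_eq_zero [CompleteSpace X] (t : ℝ) (g : ℝ → X) :
    E.P t (∫ s in Ioi t, E.G t s (g s)) = 0 := by
  by_cases hint : IntegrableOn (fun s => E.G t s (g s)) (Ioi t)
  · rw [← (E.P t).integral_comp_comm hint,
      setIntegral_congr_fun measurableSet_Ioi fun s hs => E.P_G_apply_of_le (le_of_lt hs) _,
      integral_zero]
  · rw [integral_undef hint, map_zero]

end EvolutionDichotomy

theorem half_line_solution_bound_general
    {X : Type*} [NormedAddCommGroup X] [NormedSpace ℝ X] [CompleteSpace X]
    (E : EvolutionDichotomy X) (f : ℝ → X)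
    (hfb : Bornology.IsBounded (f '' Set.Ici 0))
    (u₀ : X)
    (hζ : E.P 0 (u₀ - ∫ s in Set.Ioi (0:ℝ), E.G 0 s (f s)) =
      u₀ - ∫ s in Set.Ioi (0:ℝ), E.G 0 s (f s)) :
    ∀ t : ℝ, 0 ≤ t →
      ‖E.U t 0 (u₀ - ∫ s in Set.Ioi (0:ℝ), E.G 0 s (f s)) +
          ∫ s in Set.Ioi (0:ℝ), E.G t s (f s)‖ ≤
        E.N * ‖u₀‖ + (3 * (1 + E.H) * E.N / E.β) * ⨆ s : Set.Ici (0:ℝ), ‖f s‖ := by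
  intro t ht
  set M := ⨆ s : Set.Ici (0:ℝ), ‖f s‖
  have hfM : ∀ s ∈ Ici (0:ℝ), ‖f s‖ ≤ M := fun _ =>
    norm_le_iSup_norm_of_isBounded_image hfb
  have hM : 0 ≤ M := Real.iSup_nonneg fun _ => norm_nonneg _
  have hζ₀ : u₀ - ∫ s in Ioi (0:ℝ), E.G 0 s (f s) = E.P 0 u₀ := by
    rw [← hζ, map_sub, E.P_setIntegral_G_eq_zero, sub_zero]
  have hintegral : ‖∫ s in Ioi (0:ℝ), E.G t s (f s)‖ ≤ 2 * (E.N * M) / E.β :=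
    norm_setIntegral_le_of_norm_le_mul_exp_abs_sub measurableSet_Ioi E.β_pos
      (mul_nonneg E.N_pos.le hM) fun s hs =>
        (E.norm_G_apply_le t s (f s)).trans <| by
          rw [mul_right_comm]; gcongr
          · exact E.N_pos.le
          · exact hfM s (mem_Ioi.1 hs).le
  have hconst : 2 * (E.N * M) / E.β ≤ 3 * (1 + E.H) * E.N / E.β * M := by
    rw [div_mul_eq_mul_div]
    refine div_le_div_of_nonneg_right ?_ E.β_pos.le
    nlinarith [mul_nonneg E.N_pos.le hM, mul_nonneg (mul_nonneg E.N_pos.le hM) E.H_nonneg]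
  rw [hζ₀]
  linarith [norm_add_le (E.U t 0 (E.P 0 u₀)) (∫ s in Ioi (0:ℝ), E.G t s (f s)),
    E.norm_U_P_le ht u₀]

/-- boundedness estimate for the half-line solution
`u(t) = U(t,0) ζ₀ + ∫_0^∞ G(t,s) f(s) ds` with
`ζ₀ = u₀ − ∫_0^∞ G(0,s) f(s) ds ∈ P(0)X`:
`‖u(t)‖ ≤ N ‖u₀‖ + (3(1+H)N/β) · sup_{s ≥ 0} ‖f(s)‖` for all `t ≥ 0`. -/
theorem half_line_solution_bound
    {X : Type*} [NormedAddCommGroup X] [NormedSpace ℝ X] [CompleteSpace X]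
    (E : EvolutionDichotomy X) (f : ℝ → X)
    (hfc : ContinuousOn f (Set.Ici 0))
    (hfb : Bornology.IsBounded (f '' Set.Ici 0))
    (u₀ : X)
    (hζ : E.P 0 (u₀ - ∫ s in Set.Ioi (0:ℝ), E.G 0 s (f s)) =
      u₀ - ∫ s in Set.Ioi (0:ℝ), E.G 0 s (f s)) :
    ∀ t : ℝ, 0 ≤ t →
      ‖E.U t 0 (u₀ - ∫ s in Set.Ioi (0:ℝ), E.G 0 s (f s)) +
          ∫ s in Set.Ioi (0:ℝ), E.G t s (f s)‖ ≤
        E.N * ‖u₀‖ + (3 * (1 + E.H) * E.N / E.β) * ⨆ s : Set.Ici (0:ℝ), ‖f s‖ :=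
  half_line_solution_bound_general E f hfb u₀ hζ
end

section
/- Let f : [0,∞) → X be bounded and continuous and let u : [0,∞) → X be a bounded continuous function satisfying the mild-solution identity u(t) = U(t,0) u(0) + ∫_0^t U(t,s) f(s) ds for all t ≥ 0. Then ζ₀ := u(0) − ∫_0^∞ G(0,s) f(s) ds belongs to P(0)X, and u(t) = U(t,0) ζ₀ + ∫_0^∞ G(t,s) f(s) ds for all t ≥ 0. -/
open MeasureTheory Real Filter Bornology

/-!
Project the mild-solution identity onto the unstable spaces and pull it back to time `0` with the
inverses `U_Q(0,t)`: `U_Q(0,t) Q(t) u(t) = Q(0) u(0) + ∫_0^t U_Q(0,s) Q(s) f(s) ds`. The left side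
is `O(e^{-βt})` since `u` is bounded, so `Q(0) u(0) = -∫_0^∞ U_Q(0,s) Q(s) f(s) ds`, which is
`∫_0^∞ G(0,s) f(s) ds`; hence `ζ₀ = P(0) u(0)`. For the representation at time `t`, the operator
`G(t,s) + U(t,0) U_Q(0,s) Q(s)` equals `U(t,s)` for `s < t` and vanishes for `s ≥ t`, so integrating
it against `f` turns `U(t,0) ζ₀ + ∫_0^∞ G(t,s) f(s) ds` into the right side of the mild-solution
identity.
-/

open Set Topology

theorem ContinuousOn.clm_apply_of_norm_le {α 𝕜 F₁ F₂ : Type*} [TopologicalSpace α]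
    [NontriviallyNormedField 𝕜] [NormedAddCommGroup F₁] [NormedSpace 𝕜 F₁]
    [NormedAddCommGroup F₂] [NormedSpace 𝕜 F₂] {T : α → F₁ →L[𝕜] F₂} {g : α → F₁}
    {S : Set α} {C : ℝ} (hg : ContinuousOn g S) (hT : ∀ x, ContinuousOn (fun a => T a x) S)
    (hC : ∀ a ∈ S, ‖T a‖ ≤ C) : ContinuousOn (fun a => T a (g a)) S := by
  intro a₀ ha₀
  have hsmall : Tendsto (fun a => T a (g a - g a₀)) (𝓝[S] a₀) (𝓝 0) := by
    have hg₀ : Tendsto (fun a => C * ‖g a - g a₀‖) (𝓝[S] a₀) (𝓝 0) := by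
      simpa using ((hg a₀ ha₀).sub_const (g a₀)).norm.const_mul C
    refine squeeze_zero_norm' ?_ hg₀
    filter_upwards [self_mem_nhdsWithin] with a ha
    exact (T a).le_of_opNorm_le (hC a ha) _
  simpa [ContinuousWithinAt] using hsmall.add (hT (g a₀) a₀ ha₀)

namespace EvolutionDichotomy

variable {X : Type*} [NormedAddCommGroup X] [NormedSpace ℝ X] (E : EvolutionDichotomy X)

theorem Q_apply (t : ℝ) (x : X) : E.Q t x = x - E.P t x := rfl

theorem Q_U {s t : ℝ} (h : s ≤ t) (x : X) : E.Q t (E.U t s x) = E.U t s (E.Q s x) := by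
  simp only [Q_apply, map_sub, E.comm h]

theorem U_V_Q {s t : ℝ} (h : s ≤ t) (x : X) : E.U t s (E.V s t (E.Q t x)) = E.Q t x :=
  E.V_right h x

theorem P_V_Q {s t : ℝ} (h : s ≤ t) (x : X) : E.P s (E.V s t (E.Q t x)) = 0 :=
  E.V_mapsTo h x

theorem V_U_of_P_eq_zero {s t : ℝ} (h : s ≤ t) {y : X} (hy : E.P s y = 0) :
    E.V s t (E.U t s y) = y := by
  simpa [hy] using E.V_left h y

theorem V_self_Q (s : ℝ) (x : X) : E.V s s (E.Q s x) = E.Q s x := by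
  have h := E.V_left (le_refl s) x
  rw [E.U_id, ContinuousLinearMap.id_apply] at h
  exact h

theorem norm_le_mul_norm_U_of_P_eq_zero {s t : ℝ} (h : s ≤ t) {y : X} (hy : E.P s y = 0) :
    ‖y‖ ≤ E.N * ‖E.U t s y‖ := by
  have hQ := E.Q_decay h (E.U t s y)
  rw [E.comm h, hy, map_zero, sub_zero, E.V_U_of_P_eq_zero h hy] at hQ
  have hexp : Real.exp (-E.β * (t - s)) ≤ 1 :=
    Real.exp_le_one_iff.mpr (by nlinarith [E.β_pos])
  calc ‖y‖ ≤ E.N * Real.exp (-E.β * (t - s)) * ‖E.U t s y‖ := hQ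
    _ ≤ E.N * 1 * ‖E.U t s y‖ := by gcongr; exact E.N_pos.le
    _ = E.N * ‖E.U t s y‖ := by rw [mul_one]

theorem U_V_Q_eq_V_Q {r t s : ℝ} (hrt : r ≤ t) (hts : t ≤ s) (x : X) :
    E.U t r (E.V r s (E.Q s x)) = E.V t s (E.Q s x) := by
  have hP : E.P t (E.U t r (E.V r s (E.Q s x))) = 0 := by
    rw [E.comm hrt, E.P_V_Q (hrt.trans hts), map_zero]
  rw [← E.V_U_of_P_eq_zero hts hP, E.U_comp hrt hts, E.U_V_Q (hrt.trans hts)]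

theorem U_V_Q_eq_U_Q {r s t : ℝ} (hrs : r ≤ s) (hst : s ≤ t) (x : X) :
    E.U t r (E.V r s (E.Q s x)) = E.U t s (E.Q s x) := by
  rw [← E.U_comp hrs hst, E.U_V_Q hrs]

theorem V_Q_U {r s t : ℝ} (hrs : r ≤ s) (hst : s ≤ t) (y : X) :
    E.V r t (E.Q t (E.U t s y)) = E.V r s (E.Q s y) := by
  rw [E.Q_U hst, ← E.U_V_Q_eq_U_Q hrs hst,
    E.V_U_of_P_eq_zero (hrs.trans hst) (E.P_V_Q hrs y)]

theorem G_add_U_V_Q {r s t : ℝ} (hrs : r ≤ s) (hrt : r ≤ t) (x : X) :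
    E.G t s x + E.U t r (E.V r s (E.Q s x)) = if s < t then E.U t s x else 0 := by
  unfold G
  split_ifs with hst
  · rw [ContinuousLinearMap.comp_apply, E.U_V_Q_eq_U_Q hrs hst.le, Q_apply, map_sub,
      ← E.comm hst.le]
    abel
  · rw [E.U_V_Q_eq_V_Q hrt (not_lt.mp hst), neg_apply,
      ContinuousLinearMap.comp_apply, neg_add_cancel]

theorem continuousOn_U_apply_right (t : ℝ) (x : X) :
    ContinuousOn (fun s => E.U t s x) (Iic t) :=
  (E.U_cont x).comp (continuous_const.prodMk continuous_id).continuousOn fun _ hs => hs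

theorem continuousOn_U_apply_left (s : ℝ) (x : X) :
    ContinuousOn (fun t => E.U t s x) (Ici s) :=
  (E.U_cont x).comp (continuous_id.prodMk continuous_const).continuousOn fun _ ht => ht

theorem exists_norm_U_le [CompleteSpace X] (r t : ℝ) :
    ∃ C, ∀ s ∈ Icc r t, ‖E.U t s‖ ≤ C := by
  have hpt : ∀ x : X, ∃ C, ∀ s : Icc r t, ‖E.U t s x‖ ≤ C := fun x => by
    obtain ⟨C, hC⟩ := isCompact_Icc.exists_bound_of_continuousOn
      ((E.continuousOn_U_apply_right t x).mono Icc_subset_Iic_self)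
    exact ⟨C, fun s => hC s s.2⟩
  obtain ⟨C, hC⟩ := banach_steinhaus hpt
  exact ⟨C, fun s hs => hC ⟨s, hs⟩⟩

theorem continuousOn_U_apply [CompleteSpace X] {r t : ℝ} {g : ℝ → X}
    (hg : ContinuousOn g (Icc r t)) : ContinuousOn (fun s => E.U t s (g s)) (Icc r t) := by
  obtain ⟨C, hC⟩ := E.exists_norm_U_le r t
  exact hg.clm_apply_of_norm_le (fun x => (E.continuousOn_U_apply_right t x).mono
    Icc_subset_Iic_self) hC

theorem intervalIntegrable_U_apply [CompleteSpace X] {r t : ℝ} (hrt : r ≤ t) {g : ℝ → X}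
    (hg : ContinuousOn g (Icc r t)) :
    IntervalIntegrable (fun s => E.U t s (g s)) MeasureTheory.volume r t :=
  (E.continuousOn_U_apply hg).intervalIntegrable_of_Icc hrt

theorem norm_Q_le (t : ℝ) : ‖E.Q t‖ ≤ 1 + E.H :=
  (norm_sub_le _ _).trans (add_le_add ContinuousLinearMap.norm_id_le (E.P_bound t))

theorem continuousOn_Q_apply {S : Set ℝ} {g : ℝ → X} (hg : ContinuousOn g S) :
    ContinuousOn (fun s => E.Q s (g s)) S :=
  hg.clm_apply_of_norm_le (fun x => (continuous_const.sub (E.P_cont x)).continuousOn)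
    fun s _ => E.norm_Q_le s

theorem continuousOn_V_Q_apply {r : ℝ} {g : ℝ → X} (hg : ContinuousOn g (Ici r)) :
    ContinuousOn (fun s => E.V r s (E.Q s (g s))) (Ici r) := by
  intro s₀ hs₀
  set w := fun s => E.V r s (E.Q s (g s)) with hw
  -- `U(s,r)` is bounded below on `ker P(r)`, which contains `w s - w s₀`.
  have hbound :
      ∀ s ∈ Ici r, ‖w s - w s₀‖ ≤ E.N * ‖E.Q s (g s) - E.U s r (w s₀)‖ := fun s hs => by
    have hker : E.P r (w s - w s₀) = 0 := by
      rw [map_sub, E.P_V_Q hs, E.P_V_Q hs₀, sub_zero]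
    simpa only [map_sub, hw, E.U_V_Q hs] using E.norm_le_mul_norm_U_of_P_eq_zero hs hker
  have hlim : Tendsto (fun s => E.Q s (g s) - E.U s r (w s₀)) (𝓝[Ici r] s₀) (𝓝 0) := by
    have h := (E.continuousOn_Q_apply hg s₀ hs₀).tendsto.sub
      (E.continuousOn_U_apply_left r (w s₀) s₀ hs₀).tendsto
    simpa only [hw, E.U_V_Q hs₀, sub_self] using h
  have hsmall : Tendsto (fun s => w s - w s₀) (𝓝[Ici r] s₀) (𝓝 0) :=
    squeeze_zero_norm' (eventually_nhdsWithin_of_forall hbound)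
      (by simpa using hlim.norm.const_mul E.N)
  simpa [ContinuousWithinAt] using hsmall.add_const (w s₀)

theorem integrableOn_V_Q_apply {r : ℝ} {g : ℝ → X} (hg : ContinuousOn g (Ici r))
    (hgb : IsBounded (g '' Ici r)) :
    IntegrableOn (fun s => E.V r s (E.Q s (g s))) (Ioi r) := by
  obtain ⟨M, hM⟩ := isBounded_iff_forall_norm_le.mp hgb
  refine Integrable.mono'
    ((exp_neg_integrableOn_Ioi r E.β_pos).const_mul (E.N * M * Real.exp (E.β * r)))
    (((E.continuousOn_V_Q_apply hg).mono Ioi_subset_Ici_self).aestronglyMeasurable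
      measurableSet_Ioi) ?_
  filter_upwards [ae_restrict_mem measurableSet_Ioi] with s hs
  have hexp : Real.exp (-E.β * (s - r)) = Real.exp (E.β * r) * Real.exp (-E.β * s) := by
    rw [← Real.exp_add]; ring_nf
  calc ‖E.V r s (E.Q s (g s))‖ ≤ E.N * Real.exp (-E.β * (s - r)) * ‖g s‖ :=
        E.Q_decay hs.le (g s)
    _ ≤ E.N * Real.exp (-E.β * (s - r)) * M := by
        have := E.N_pos
        gcongr
        exact hM _ (mem_image_of_mem g (mem_Ici.mpr hs.le))
    _ = E.N * M * Real.exp (E.β * r) * Real.exp (-E.β * s) := by rw [hexp]; ring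

theorem tendsto_V_Q_atTop_of_isBounded {r : ℝ} {u : ℝ → X} (hub : IsBounded (u '' Ici r)) :
    Tendsto (fun t => E.V r t (E.Q t (u t))) atTop (𝓝 0) := by
  obtain ⟨M, hM⟩ := isBounded_iff_forall_norm_le.mp hub
  have hexp : Tendsto (fun t => -E.β * (t - r)) atTop atBot :=
    (tendsto_atTop_add_const_right _ (-r) tendsto_id).const_mul_atTop_of_neg
      (neg_neg_of_pos E.β_pos)
  have hdecay : Tendsto (fun t => E.N * Real.exp (-E.β * (t - r)) * M) atTop (𝓝 0) := by
    simpa using ((Real.tendsto_exp_atBot.comp hexp).const_mul E.N).mul_const M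
  refine squeeze_zero_norm' ?_ hdecay
  filter_upwards [eventually_ge_atTop r] with t ht
  calc ‖E.V r t (E.Q t (u t))‖ ≤ E.N * Real.exp (-E.β * (t - r)) * ‖u t‖ :=
        E.Q_decay ht (u t)
    _ ≤ E.N * Real.exp (-E.β * (t - r)) * M := by
        have := E.N_pos
        gcongr
        exact hM _ (mem_image_of_mem u ht)

theorem V_Q_mild_solution [CompleteSpace X] {r t : ℝ} (hrt : r ≤ t) (x : X) {f : ℝ → X}
    (hf : IntervalIntegrable (fun s => E.U t s (f s)) volume r t) :
    E.V r t (E.Q t (E.U t r x + ∫ s in r..t, E.U t s (f s))) =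
      E.Q r x + ∫ s in r..t, E.V r s (E.Q s (f s)) := by
  have hcomm := ((E.V r t).comp (E.Q t)).intervalIntegral_comp_comm hf
  simp only [ContinuousLinearMap.comp_apply] at hcomm
  simp only [map_add]
  rw [← hcomm, E.V_Q_U le_rfl hrt, E.V_self_Q]
  congr 1
  refine intervalIntegral.integral_congr fun s hs => ?_
  rw [uIcc_of_le hrt] at hs
  exact E.V_Q_U hs.1 hs.2 (f s)

theorem Q_eq_neg_integral_V_Q [CompleteSpace X] {r : ℝ} {f u : ℝ → X}
    (hfc : ContinuousOn f (Ici r)) (hfb : IsBounded (f '' Ici r))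
    (hub : IsBounded (u '' Ici r))
    (hmild : ∀ t, r ≤ t → u t = E.U t r (u r) + ∫ s in r..t, E.U t s (f s)) :
    E.Q r (u r) = -∫ s in Ioi r, E.V r s (E.Q s (f s)) := by
  have hpullback : (fun t => E.Q r (u r) + ∫ s in r..t, E.V r s (E.Q s (f s)))
      =ᶠ[atTop] fun t => E.V r t (E.Q t (u t)) := by
    filter_upwards [eventually_ge_atTop r] with t ht
    rw [hmild t ht, E.V_Q_mild_solution ht (u r)
      (E.intervalIntegrable_U_apply ht (hfc.mono Icc_subset_Ici_self))]
  have hlim := (tendsto_const_nhds (x := E.Q r (u r))).add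
    (intervalIntegral_tendsto_integral_Ioi r (E.integrableOn_V_Q_apply hfc hfb) tendsto_id)
  exact eq_neg_of_add_eq_zero_left <|
    tendsto_nhds_unique (hlim.congr' hpullback) (E.tendsto_V_Q_atTop_of_isBounded hub)

theorem integral_G_add_U_integral_V_Q [CompleteSpace X] {r t : ℝ} (hrt : r ≤ t) {f : ℝ → X}
    (hfc : ContinuousOn f (Ici r)) (hfb : IsBounded (f '' Ici r)) :
    (∫ s in Ioi r, E.G t s (f s)) + E.U t r (∫ s in Ioi r, E.V r s (E.Q s (f s))) =
      ∫ s in r..t, E.U t s (f s) := by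
  have hw := E.integrableOn_V_Q_apply hfc hfb
  have hF : IntegrableOn ((Iio t).indicator fun s => E.U t s (f s)) (Ioi r) := by
    rw [IntegrableOn, integrable_indicator_iff measurableSet_Iio, IntegrableOn,
      Measure.restrict_restrict measurableSet_Iio, Iio_inter_Ioi]
    exact (E.continuousOn_U_apply (hfc.mono Icc_subset_Ici_self)).integrableOn_Icc.mono_set
      Ioo_subset_Icc_self
  have hG : EqOn (fun s => E.G t s (f s))
      (fun s => (Iio t).indicator (fun s => E.U t s (f s)) s - E.U t r (E.V r s (E.Q s (f s))))
      (Ioi r) := fun s hs => by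
    dsimp only
    rw [eq_sub_iff_add_eq, E.G_add_U_V_Q hs.le hrt]
    simp only [indicator_apply, mem_Iio]
  rw [← (E.U t r).integral_comp_comm hw, setIntegral_congr_fun measurableSet_Ioi hG,
    integral_sub hF ((E.U t r).integrable_comp hw), sub_add_cancel,
    setIntegral_indicator measurableSet_Iio, Ioi_inter_Iio, intervalIntegral.integral_of_le hrt,
    integral_Ioc_eq_integral_Ioo]

end EvolutionDichotomy

theorem half_line_mild_solution_representation_general
    {X : Type*} [NormedAddCommGroup X] [NormedSpace ℝ X] [CompleteSpace X]
    (E : EvolutionDichotomy X) (f u : ℝ → X)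
    (hfc : ContinuousOn f (Set.Ici 0))
    (hfb : Bornology.IsBounded (f '' Set.Ici 0))
    (hub : Bornology.IsBounded (u '' Set.Ici 0))
    (hmild : ∀ t : ℝ, 0 ≤ t →
      u t = E.U t 0 (u 0) + ∫ s in (0:ℝ)..t, E.U t s (f s)) :
    (E.P 0 (u 0 - ∫ s in Set.Ioi (0:ℝ), E.G 0 s (f s)) =
      u 0 - ∫ s in Set.Ioi (0:ℝ), E.G 0 s (f s)) ∧
    ∀ t : ℝ, 0 ≤ t →
      u t = E.U t 0 (u 0 - ∫ s in Set.Ioi (0:ℝ), E.G 0 s (f s)) +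
        ∫ s in Set.Ioi (0:ℝ), E.G t s (f s) := by
  have hQ := E.Q_eq_neg_integral_V_Q hfc hfb hub hmild
  have hG₀ : ∫ s in Set.Ioi (0:ℝ), E.G 0 s (f s) =
      -∫ s in Set.Ioi 0, E.V 0 s (E.Q s (f s)) := by
    simpa [E.U_id, eq_neg_iff_add_eq_zero] using E.integral_G_add_U_integral_V_Q le_rfl hfc hfb
  have hζ : u 0 - ∫ s in Set.Ioi (0:ℝ), E.G 0 s (f s) = E.P 0 (u 0) := by
    rw [hG₀, ← hQ, EvolutionDichotomy.Q_apply, sub_sub_cancel]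
  refine ⟨by rw [hζ, E.P_proj], fun t ht => ?_⟩
  rw [hmild t ht, ← E.integral_G_add_U_integral_V_Q ht hfc hfb, hG₀, map_sub, map_neg]
  abel

/-- any bounded mild solution on the half line can be represented via the
Green function: `ζ₀ := u(0) − ∫_0^∞ G(0,s) f(s) ds ∈ P(0)X` and
`u(t) = U(t,0) ζ₀ + ∫_0^∞ G(t,s) f(s) ds` for all `t ≥ 0`. -/
theorem half_line_mild_solution_representation
    {X : Type*} [NormedAddCommGroup X] [NormedSpace ℝ X] [CompleteSpace X]
    (E : EvolutionDichotomy X) (f u : ℝ → X)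
    (hfc : ContinuousOn f (Set.Ici 0))
    (hfb : Bornology.IsBounded (f '' Set.Ici 0))
    (huc : ContinuousOn u (Set.Ici 0))
    (hub : Bornology.IsBounded (u '' Set.Ici 0))
    (hmild : ∀ t : ℝ, 0 ≤ t →
      u t = E.U t 0 (u 0) + ∫ s in (0:ℝ)..t, E.U t s (f s)) :
    (E.P 0 (u 0 - ∫ s in Set.Ioi (0:ℝ), E.G 0 s (f s)) =
      u 0 - ∫ s in Set.Ioi (0:ℝ), E.G 0 s (f s)) ∧
    ∀ t : ℝ, 0 ≤ t →
      u t = E.U t 0 (u 0 - ∫ s in Set.Ioi (0:ℝ), E.G 0 s (f s)) +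
        ∫ s in Set.Ioi (0:ℝ), E.G t s (f s) :=
  half_line_mild_solution_representation_general E f u hfc hfb hub hmild
end
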